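/- For a vector v indexed by Fin d × (Fin d × Fin d), one has A *ᵥ v = 0 if and only if there exists μ : Fin d → ℂ with Σ_i μ i = 0 such that v (i,(p,q)) = μ i · φ(p,q) for all i, p, q, where φ(p,q) = 1/√d if p = q and 0 otherwise. (Equivalently, the null space of A is spanned by the vectors μ ⊗ φ with μ orthogonal to the uniform vector ν = (1/√d)·Σ_i e_i.) -/

import Mathlib

open Matrix Kronecker ComplexOrder

/-- Projector onto the maximally entangled state: Φ[(i,j),(k,l)] = 1/d if i=j and k=l. -/
noncomputable def Phi (d : ℕ) : Matrix (Fin d × Fin d) (Fin d × Fin d) ℂ :=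
  fun p q => if p.1 = p.2 ∧ q.1 = q.2 then ((d : ℂ))⁻¹ else 0

/-- Coefficients a i k: 1 on the diagonal, -1/(d²-1) off the diagonal. -/
noncomputable def aCoef (d : ℕ) (i k : Fin d) : ℝ :=
  if i = k then 1 else -1 / ((d : ℝ) ^ 2 - 1)

/-- The matrix A = Σ_{i,k} E_{ik} ⊗ₖ (a i k • (I − Φ) + Φ). -/
noncomputable def Amat (d : ℕ) : Matrix (Fin d × (Fin d × Fin d)) (Fin d × (Fin d × Fin d)) ℂ :=
  ∑ i : Fin d, ∑ k : Fin d,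
    (Matrix.single i k (1 : ℂ)) ⊗ₖ
      (aCoef d i k • ((1 : Matrix (Fin d × Fin d) (Fin d × Fin d) ℂ) - Phi d) + Phi d)

/-!
With `a` the coefficient matrix of `aCoef d` and `J` the all-ones matrix,
`A = a ⊗ (1 - Φ) + J ⊗ Φ`, and on `v = vec X` it acts as `X ↦ (1 - Φ) X aᵀ + Φ X Jᵀ`.
As `Φ = φ φᵀ` and `1 - Φ` are complementary idempotents, this vanishes iff both summands do.
For `d ≥ 2` the matrix `a = (1 - b) • 1 + b • J`, `b = -1/(d² - 1)`, is invertible, so the first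
summand vanishes iff `(1 - Φ) X = 0`, i.e. `X = φ μᵀ`; the second then reads `J μ = 0`,
i.e. `∑ μ = 0`.
-/

namespace Matrix

section Projector

variable {K ι κ : Type*} [CommRing K] [Fintype κ] {φ ψ : κ → K}

lemma isIdempotentElem_vecMulVec (h : ψ ⬝ᵥ φ = 1) : IsIdempotentElem (vecMulVec φ ψ) := by
  rw [IsIdempotentElem, vecMulVec_mul_vecMulVec, h, one_smul]

lemma vecMulVec_eq_zero_iff_right (h : ψ ⬝ᵥ φ = 1) {μ : ι → K} : vecMulVec φ μ = 0 ↔ μ = 0 :=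
  ⟨fun hμ => by simpa [vecMul_vecMulVec, h] using congrArg (ψ ᵥ* ·) hμ,
    fun hμ => by simp [hμ, ← Matrix.ext_iff, vecMulVec_apply]⟩

variable [DecidableEq κ]

lemma one_sub_mul_add_mul_eq_zero_iff {P : Matrix κ κ K} (hP : IsIdempotentElem P)
    (A B : Matrix κ ι K) : (1 - P) * A + P * B = 0 ↔ (1 - P) * A = 0 ∧ P * B = 0 := by
  refine ⟨fun h => ⟨?_, ?_⟩, fun h => by rw [h.1, h.2, add_zero]⟩
  · simpa [Matrix.mul_add, ← Matrix.mul_assoc, hP.one_sub.eq, hP.one_sub_mul_self]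
      using congrArg ((1 - P) * ·) h
  · simpa [Matrix.mul_add, ← Matrix.mul_assoc, hP.eq, hP.mul_one_sub_self]
      using congrArg (P * ·) h

lemma one_sub_vecMulVec_mul_eq_zero_iff (h : ψ ⬝ᵥ φ = 1) {X : Matrix κ ι K} :
    (1 - vecMulVec φ ψ) * X = 0 ↔ ∃ μ, X = vecMulVec φ μ := by
  rw [Matrix.sub_mul, Matrix.one_mul, sub_eq_zero, vecMulVec_mul]
  refine ⟨fun hX => ⟨_, hX⟩, ?_⟩
  rintro ⟨μ, rfl⟩
  rw [vecMul_vecMulVec, h, one_smul]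

theorem kronecker_one_sub_vecMulVec_add_mulVec_vec_eq_zero_iff [Fintype ι] [DecidableEq ι]
    {M N : Matrix ι ι K} (hM : IsUnit M) (h : ψ ⬝ᵥ φ = 1) (X : Matrix κ ι K) :
    (M ⊗ₖ (1 - vecMulVec φ ψ) + N ⊗ₖ vecMulVec φ ψ) *ᵥ vec X = 0 ↔
      ∃ μ, N *ᵥ μ = 0 ∧ X = vecMulVec φ μ := by
  have : Invertible M := hM.invertible
  rw [add_mulVec, kronecker_mulVec_vec, kronecker_mulVec_vec, ← vec_add, ← vec_zero, vec_inj,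
    Matrix.mul_assoc, Matrix.mul_assoc,
    one_sub_mul_add_mul_eq_zero_iff (isIdempotentElem_vecMulVec h), ← Matrix.mul_assoc,
    (mul_left_injective_of_invertible Mᵀ).eq_iff' (Matrix.zero_mul _),
    one_sub_vecMulVec_mul_eq_zero_iff h, ← exists_and_right]
  refine exists_congr fun μ => and_comm.trans (and_congr_left fun hX => ?_)
  rw [hX, ← Matrix.mul_assoc, vecMulVec_mul_vecMulVec, h, one_smul, vecMulVec_mul,
    vecMul_transpose, vecMulVec_eq_zero_iff_right h]

end Projector

variable {K ι : Type*} [Field K] [Fintype ι] [DecidableEq ι] in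
lemma isUnit_smul_one_add_smul_of_const_one {c b : K} (hc : c ≠ 0)
    (hcb : c + Fintype.card ι * b ≠ 0) : IsUnit (c • 1 + b • of fun _ _ : ι => (1 : K)) := by
  refine mulVec_injective_iff_isUnit.mp ((injective_iff_map_eq_zero (mulVecLin _)).mpr ?_)
  intro w hw
  have hrow : ∀ i, c * w i + b * ∑ j, w j = 0 := fun i => by
    simpa [add_mulVec, smul_mulVec, mulVec, dotProduct, Finset.mul_sum] using congrFun hw i
  have hsum : ∑ j, w j = 0 := by
    have := Finset.sum_eq_zero (s := Finset.univ) fun i _ => hrow i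
    rw [Finset.sum_add_distrib, ← Finset.mul_sum, Finset.sum_const, Finset.card_univ,
      nsmul_eq_mul] at this
    exact (mul_eq_zero.mp (by linear_combination this)).resolve_left hcb
  funext i
  simpa [hsum, hc] using hrow i

end Matrix

section

variable (d : ℕ)

noncomputable def maxEntangled : Fin d × Fin d → ℂ :=
  fun x => if x.1 = x.2 then ((Real.sqrt d : ℂ))⁻¹ else 0

lemma inv_sqrt_mul_inv_sqrt : ((Real.sqrt d : ℂ))⁻¹ * ((Real.sqrt d : ℂ))⁻¹ = (d : ℂ)⁻¹ := by
  rw [← mul_inv, ← Complex.ofReal_mul, Real.mul_self_sqrt d.cast_nonneg, Complex.ofReal_natCast]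

lemma Phi_eq_vecMulVec : Phi d = vecMulVec (maxEntangled d) (maxEntangled d) := by
  ext x y
  simp only [Phi, vecMulVec_apply, maxEntangled]
  split_ifs <;> simp_all [inv_sqrt_mul_inv_sqrt]

lemma maxEntangled_dotProduct_self (hd : d ≠ 0) :
    maxEntangled d ⬝ᵥ maxEntangled d = 1 := by
  simp [dotProduct, maxEntangled, Fintype.sum_prod_type, inv_sqrt_mul_inv_sqrt, hd]

lemma Amat_eq_kronecker_add_kronecker : Amat d =
    (of fun i k => (aCoef d i k : ℂ)) ⊗ₖ (1 - Phi d) + (of fun _ _ => 1) ⊗ₖ Phi d := by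
  ext ⟨i, x⟩ ⟨k, y⟩
  simp [Amat, Matrix.sum_apply, single_apply, ite_and]

lemma isUnit_aCoef (hd : 2 ≤ d) : IsUnit (of fun i k => (aCoef d i k : ℂ)) := by
  set b : ℝ := -1 / ((d : ℝ) ^ 2 - 1) with hb
  have hd' : (2 : ℝ) ≤ d := by exact_mod_cast hd
  have hb_neg : b < 0 := div_neg_of_neg_of_pos (by norm_num) (by nlinarith)
  have hsum : 1 - b + d * b = d / (d + 1) := by
    rw [hb]
    field_simp [show (d : ℝ) ^ 2 - 1 ≠ 0 by nlinarith]
    ring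
  have hA : (of fun i k => (aCoef d i k : ℂ)) =
      ((1 - b : ℝ) : ℂ) • 1 + (b : ℂ) • of fun _ _ => 1 := by
    ext i k
    by_cases hik : i = k <;> simp [aCoef, hik, hb]
  rw [hA]
  refine isUnit_smul_one_add_smul_of_const_one ?_ ?_
  · exact_mod_cast (by linarith : (0 : ℝ) < 1 - b).ne'
  · rw [Fintype.card_fin]
    exact_mod_cast (by rw [hsum]; positivity : (0 : ℝ) < 1 - b + d * b).ne'

end

theorem stmt_5 (d : ℕ) (hd : 2 ≤ d) (v : Fin d × (Fin d × Fin d) → ℂ) :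
    Amat d *ᵥ v = 0 ↔
      ∃ μ : Fin d → ℂ, (∑ i : Fin d, μ i) = 0 ∧
        ∀ i p q : Fin d,
          v (i, (p, q)) = μ i * (if p = q then ((Real.sqrt d : ℂ))⁻¹ else 0) := by
  have : Nonempty (Fin d) := ⟨⟨0, by omega⟩⟩
  -- `vec` stacks the columns `v (i, ·)` of this matrix
  change Amat d *ᵥ vec (of fun x i => v (i, x)) = 0 ↔ _
  rw [Amat_eq_kronecker_add_kronecker, Phi_eq_vecMulVec,
    kronecker_one_sub_vecMulVec_add_mulVec_vec_eq_zero_iff (isUnit_aCoef d hd)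
      (maxEntangled_dotProduct_self d (by omega))]
  refine exists_congr fun μ => and_congr ?_ ?_
  · simp [funext_iff, mulVec, dotProduct]
  · simp only [← Matrix.ext_iff, of_apply, vecMulVec_apply, maxEntangled, Prod.forall]
    exact ⟨fun h i p q => (h p q i).trans (mul_comm _ _),
      fun h p q i => (h i p q).trans (mul_comm _ _)⟩
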